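/- Let a > 0, k ∈ ℕ with k ≥ 0. Then for all real x, y ≥ 0: (x − y)(x^{2k+1} − y^{2k+1}) ≥ (4(2k+1)/(2k+2)²)(x^{k+1} − y^{k+1})². -/

import Mathlib

open MeasureTheory Set

/-- Cauchy–Schwarz core: for `0 ≤ y ≤ x`,
`(∫ t in Ioc y x, t^k)^2 ≤ (x - y) * ∫ t in Ioc y x, t^(2k)`. -/
lemma CS_core (k : ℕ) {x y : ℝ} (hy : 0 ≤ y) (hxy : y ≤ x) :
    (∫ t in Ioc y x, t ^ k) ^ 2 ≤ (x - y) * ∫ t in Ioc y x, t ^ (2 * k) := by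
  set μ : Measure ℝ := volume.restrict (Ioc y x) with hμ
  have hfin : IsFiniteMeasure μ := by
    constructor
    rw [hμ, Measure.restrict_apply_univ]
    exact measure_Ioc_lt_top
  have hconj : (2 : ℝ).HolderConjugate 2 := by
    constructor <;> norm_num
  set M : ℝ := max 1 x with hM
  have hbound : ∀ᵐ t ∂μ, ‖t ^ k‖ ≤ M ^ k := by
    rw [hμ]
    filter_upwards [ae_restrict_mem measurableSet_Ioc] with t ht
    rw [Real.norm_eq_abs, abs_pow]
    refine pow_le_pow_left₀ (abs_nonneg t) ?_ k
    rw [abs_of_nonneg (le_trans hy (le_of_lt ht.1))]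
    exact le_trans ht.2 (le_max_right 1 x)
  have hmem : MemLp (fun t : ℝ => t ^ k) (ENNReal.ofReal 2) μ := by
    refine MemLp.mono_exponent (q := (⊤ : ENNReal)) ?_ le_top
    exact memLp_top_of_bound ((continuous_pow k).aestronglyMeasurable) _ hbound
  have hone : MemLp (fun _ : ℝ => (1 : ℝ)) (ENNReal.ofReal 2) μ :=
    memLp_const 1
  have hnn : 0 ≤ᵐ[μ] fun t : ℝ => t ^ k := by
    rw [hμ]
    filter_upwards [ae_restrict_mem measurableSet_Ioc] with t ht
    exact pow_nonneg (le_trans hy (le_of_lt ht.1)) k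
  have hCS := integral_mul_le_Lp_mul_Lq_of_nonneg hconj hnn
      (Filter.Eventually.of_forall fun _ => zero_le_one) hmem hone
  simp only [mul_one] at hCS
  -- rewrite the rpow-squared integrands
  have h1 : ∫ t, ((t : ℝ) ^ k) ^ (2 : ℝ) ∂μ = ∫ t in Ioc y x, t ^ (2 * k) := by
    rw [hμ]
    refine setIntegral_congr_fun measurableSet_Ioc fun t ht => ?_
    have : (0:ℝ) ≤ t := le_trans hy (le_of_lt ht.1)
    rw [show ((t : ℝ) ^ k) ^ (2 : ℝ) = ((t:ℝ)^k) ^ (2:ℕ) by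
      rw [← Real.rpow_natCast ((t:ℝ)^k) 2]; norm_num]
    rw [← pow_mul, mul_comm k 2]
  have h2 : ∫ _t, (1 : ℝ) ^ (2 : ℝ) ∂μ = x - y := by
    simp [hμ, hxy, Real.volume_Ioc, ENNReal.toReal_ofReal (by linarith : (0:ℝ) ≤ x - y)]
  rw [h1, h2] at hCS
  have hInn : 0 ≤ ∫ t in Ioc y x, t ^ (2 * k) := by
    refine setIntegral_nonneg measurableSet_Ioc fun t ht => ?_
    exact pow_nonneg (le_trans hy (le_of_lt ht.1)) _
  have hA : 0 ≤ ∫ t, (t : ℝ) ^ k ∂μ :=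
    integral_nonneg_of_ae hnn
  calc (∫ t in Ioc y x, t ^ k) ^ 2
      ≤ ((∫ t in Ioc y x, t ^ (2*k)) ^ (1/(2:ℝ)) * (x - y) ^ (1/(2:ℝ))) ^ 2 := by
        apply pow_le_pow_left₀ hA hCS
    _ = (x - y) * ∫ t in Ioc y x, t ^ (2 * k) := by
        rw [mul_pow, ← Real.rpow_natCast (_ ^ (1/(2:ℝ))) 2,
          ← Real.rpow_natCast ((x - y) ^ (1/(2:ℝ))) 2,
          ← Real.rpow_mul hInn, ← Real.rpow_mul (by linarith : (0:ℝ) ≤ x - y)]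
        norm_num [mul_comm]

lemma main_le (k : ℕ) {x y : ℝ} (hy : 0 ≤ y) (hxy : y ≤ x) :
    (x - y) * (x ^ (2 * k + 1) - y ^ (2 * k + 1)) ≥
      (4 * (2 * (k : ℝ) + 1) / (2 * (k : ℝ) + 2) ^ 2) *
        (x ^ (k + 1) - y ^ (k + 1)) ^ 2 := by
  set A : ℝ := ∫ t in Ioc y x, t ^ k with hA
  set C : ℝ := ∫ t in Ioc y x, t ^ (2 * k) with hC
  have hCS := CS_core k hy hxy
  have hAeq : x ^ (k + 1) - y ^ (k + 1) = ((k : ℝ) + 1) * A := by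
    rw [hA, ← intervalIntegral.integral_of_le hxy, integral_pow]
    have : ((k : ℝ) + 1) ≠ 0 := by positivity
    field_simp
  have hCeq : x ^ (2 * k + 1) - y ^ (2 * k + 1) = (2 * (k : ℝ) + 1) * C := by
    rw [hC, ← intervalIntegral.integral_of_le hxy, integral_pow]
    have : (2 * (k : ℝ) + 1) ≠ 0 := by positivity
    push_cast
    field_simp
  rw [hAeq, hCeq, ge_iff_le]
  have hk2 : (2 * (k : ℝ) + 2) ^ 2 ≠ 0 := by positivity
  have key : (2 * (k : ℝ) + 1) * A ^ 2 ≤ (2 * (k : ℝ) + 1) * ((x - y) * C) := by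
    apply mul_le_mul_of_nonneg_left hCS (by positivity)
  calc 4 * (2 * (k : ℝ) + 1) / (2 * (k : ℝ) + 2) ^ 2 * (((k : ℝ) + 1) * A) ^ 2
      = (2 * (k : ℝ) + 1) * A ^ 2 := by field_simp; ring
    _ ≤ (2 * (k : ℝ) + 1) * ((x - y) * C) := key
    _ = (x - y) * ((2 * (k : ℝ) + 1) * C) := by ring

/-- Elementary inequality (C.2) of Brasco–Lindgren–Parini: for `x, y ≥ 0`,
`(x − y)(x^{2k+1} − y^{2k+1}) ≥ (4(2k+1)/(2k+2)²)(x^{k+1} − y^{k+1})²`. -/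
theorem stmt_16 (a : ℝ) (ha : 0 < a) (k : ℕ) (x y : ℝ) (hx : 0 ≤ x) (hy : 0 ≤ y) :
    (x - y) * (x ^ (2 * k + 1) - y ^ (2 * k + 1)) ≥
      (4 * (2 * (k : ℝ) + 1) / (2 * (k : ℝ) + 2) ^ 2) *
        (x ^ (k + 1) - y ^ (k + 1)) ^ 2 := by
  rcases le_total y x with h | h
  · exact main_le k hy h
  · have := main_le k hx h
    calc (4 * (2 * (k : ℝ) + 1) / (2 * (k : ℝ) + 2) ^ 2) *
        (x ^ (k + 1) - y ^ (k + 1)) ^ 2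
        = (4 * (2 * (k : ℝ) + 1) / (2 * (k : ℝ) + 2) ^ 2) *
          (y ^ (k + 1) - x ^ (k + 1)) ^ 2 := by ring
      _ ≤ (y - x) * (y ^ (2 * k + 1) - x ^ (2 * k + 1)) := this
      _ = (x - y) * (x ^ (2 * k + 1) - y ^ (2 * k + 1)) := by ring
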